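/- arXiv:2004.07728 — 3 statements merged into one kernel-verified Lean document; each statement's English description precedes it below -/
import Mathlib

section
/- The function d(a,b) = |a − b| / √(a² + b² + c) on the nonnegative reals (with fixed constant c > 0) satisfies the triangle inequality: d(a,z) ≤ d(a,b) + d(b,z) for all a, b, z ≥ 0. -/
/-!
Write `d c a b = |a - b| / √(a² + b² + c)`. For `0 ≤ x`, the map `t ↦ d c x t` decreases on
`[0, x]` and increases on `[x, ∞)`, so the triangle inequality `d a z ≤ d a b + d b z` is only
non-trivial when `b` lies between `a` and `z`. In that case, with `a ≤ b ≤ z`, clearing the square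
roots and bounding `√(a² + b² + c) √(b² + z² + c)` below by `ab + bz + c` (Cauchy–Schwarz) leaves a
polynomial inequality which, in `a`, `p = b - a`, `q = z - b`, has only nonnegative coefficients.
-/

open Real

noncomputable def ssimDist (c a b : ℝ) : ℝ := |a - b| / √(a ^ 2 + b ^ 2 + c)

theorem mul_add_mul_add_le_sqrt_mul_sqrt {c : ℝ} (hc : 0 ≤ c) (x₁ x₂ y₁ y₂ : ℝ) :
    x₁ * y₁ + x₂ * y₂ + c ≤ √(x₁ ^ 2 + x₂ ^ 2 + c) * √(y₁ ^ 2 + y₂ ^ 2 + c) := by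
  rw [← sqrt_mul (by positivity)]
  refine (le_abs_self _).trans (abs_le_sqrt ?_)
  -- Lagrange's identity for `(x₁, x₂, √c)` and `(y₁, y₂, √c)`
  nlinarith [sq_nonneg (x₁ * y₂ - x₂ * y₁), mul_nonneg hc (sq_nonneg (x₁ - y₁)),
    mul_nonneg hc (sq_nonneg (x₂ - y₂))]

theorem ssimDist_triangle_poly {a b z c : ℝ} (hc : 0 ≤ c) (ha : 0 ≤ a) (hab : a ≤ b)
    (hbz : b ≤ z) :
    (z - a) ^ 2 * ((a ^ 2 + b ^ 2 + c) * (b ^ 2 + z ^ 2 + c)) ≤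
      ((b - a) ^ 2 * (b ^ 2 + z ^ 2 + c) + (z - b) ^ 2 * (a ^ 2 + b ^ 2 + c) +
        2 * (b - a) * (z - b) * (a * b + b * z + c)) * (a ^ 2 + z ^ 2 + c) := by
  obtain ⟨p, hp, rfl⟩ : ∃ p, 0 ≤ p ∧ b = a + p := ⟨b - a, sub_nonneg.2 hab, by ring⟩
  obtain ⟨q, hq, rfl⟩ : ∃ q, 0 ≤ q ∧ z = a + p + q := ⟨z - (a + p), sub_nonneg.2 hbz, by ring⟩
  rw [← sub_nonneg]
  convert_to 0 ≤ 2 * p ^ 2 * q ^ 2 * c + 3 * p ^ 2 * q ^ 4 + 8 * p ^ 3 * q ^ 3 + 7 * p ^ 4 * q ^ 2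
    + 2 * p ^ 5 * q + 2 * a * p * q ^ 4 + 14 * a * p ^ 2 * q ^ 3 + 18 * a * p ^ 3 * q ^ 2
    + 6 * a * p ^ 4 * q + 4 * a ^ 2 * p * q ^ 3 + 12 * a ^ 2 * p ^ 2 * q ^ 2 + 4 * a ^ 2 * p ^ 3 * q
    using 1
  · ring
  · positivity

namespace ssimDist

variable {c a b z s t x : ℝ}

theorem comm (c a b : ℝ) : ssimDist c a b = ssimDist c b a := by
  rw [ssimDist, ssimDist, abs_sub_comm, add_comm (a ^ 2)]

theorem nonneg : 0 ≤ ssimDist c a b := by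
  unfold ssimDist; positivity

theorem eq_sqrt (hc : 0 ≤ c) : ssimDist c a b = √((a - b) ^ 2 / (a ^ 2 + b ^ 2 + c)) := by
  rw [ssimDist, sqrt_div' _ (by positivity), sqrt_sq_eq_abs]

theorem le_of_mem_uIcc (hc : 0 < c) (hx : 0 ≤ x) (ht : 0 ≤ t) (hs : s ∈ Set.uIcc x t) :
    ssimDist c x s ≤ ssimDist c x t := by
  rw [eq_sqrt hc.le, eq_sqrt hc.le]
  refine sqrt_le_sqrt ((div_le_div_iff₀ (by positivity) (by positivity)).2 ?_)
  have hdiff : (t - x) ^ 2 * (x ^ 2 + s ^ 2 + c) - (s - x) ^ 2 * (x ^ 2 + t ^ 2 + c) =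
      (t - s) * (t + s - 2 * x) * (x ^ 2 + c) + x * (t - s) * ((t - x) * s + (s - x) * t) := by
    ring
  have hpos : 0 ≤ (t - s) * (t + s - 2 * x) * (x ^ 2 + c) +
      x * (t - s) * ((t - x) * s + (s - x) * t) := by
    rcases Set.mem_uIcc.1 hs with ⟨hxs, hst⟩ | ⟨hts, hsx⟩
    · have := sub_nonneg.2 hst
      have : 0 ≤ t + s - 2 * x := by linarith
      have := mul_nonneg (sub_nonneg.2 (hxs.trans hst)) (hx.trans hxs)
      have := mul_nonneg (sub_nonneg.2 hxs) ht
      positivity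
    · have h₁ : 0 ≤ (t - s) * (t + s - 2 * x) :=
        mul_nonneg_of_nonpos_of_nonpos (by linarith) (by linarith)
      have h₂ : 0 ≤ x * (t - s) * ((t - x) * s + (s - x) * t) := by
        refine mul_nonneg_of_nonpos_of_nonpos (mul_nonpos_of_nonneg_of_nonpos hx (by linarith)) ?_
        have := mul_nonpos_of_nonpos_of_nonneg (by linarith : t - x ≤ 0) (ht.trans hts)
        have := mul_nonpos_of_nonpos_of_nonneg (by linarith : s - x ≤ 0) ht
        linarith
      positivity
  linarith

theorem triangle_of_le_of_le (hc : 0 < c) (ha : 0 ≤ a) (hab : a ≤ b) (hbz : b ≤ z) :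
    ssimDist c a z ≤ ssimDist c a b + ssimDist c b z := by
  have hA : 0 < √(a ^ 2 + b ^ 2 + c) := sqrt_pos.2 (by positivity)
  have hB : 0 < √(b ^ 2 + z ^ 2 + c) := sqrt_pos.2 (by positivity)
  have hC : 0 < √(a ^ 2 + z ^ 2 + c) := sqrt_pos.2 (by positivity)
  have hp := sub_nonneg.2 hab
  have hq := sub_nonneg.2 hbz
  have hcs := mul_add_mul_add_le_sqrt_mul_sqrt hc.le a b b z
  have key : ((z - a) * (√(a ^ 2 + b ^ 2 + c) * √(b ^ 2 + z ^ 2 + c))) ^ 2 ≤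
      (((b - a) * √(b ^ 2 + z ^ 2 + c) + (z - b) * √(a ^ 2 + b ^ 2 + c)) *
        √(a ^ 2 + z ^ 2 + c)) ^ 2 := by
    calc _ = (z - a) ^ 2 * ((a ^ 2 + b ^ 2 + c) * (b ^ 2 + z ^ 2 + c)) := by
          rw [mul_pow, mul_pow, sq_sqrt (by positivity), sq_sqrt (by positivity)]
      _ ≤ ((b - a) ^ 2 * (b ^ 2 + z ^ 2 + c) + (z - b) ^ 2 * (a ^ 2 + b ^ 2 + c) +
            2 * (b - a) * (z - b) * (a * b + b * z + c)) * (a ^ 2 + z ^ 2 + c) :=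
          ssimDist_triangle_poly hc.le ha hab hbz
      _ ≤ ((b - a) ^ 2 * (b ^ 2 + z ^ 2 + c) + (z - b) ^ 2 * (a ^ 2 + b ^ 2 + c) +
            2 * (b - a) * (z - b) * (√(a ^ 2 + b ^ 2 + c) * √(b ^ 2 + z ^ 2 + c))) *
              (a ^ 2 + z ^ 2 + c) := by
          gcongr
      _ = _ := by
          rw [mul_pow, add_sq, mul_pow, mul_pow, sq_sqrt (by positivity), sq_sqrt (by positivity),
            sq_sqrt (by positivity)]
          ring
  rw [ssimDist, ssimDist, ssimDist, abs_sub_comm, abs_of_nonneg (by linarith), abs_sub_comm,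
    abs_of_nonneg hp, abs_sub_comm, abs_of_nonneg hq, div_add_div _ _ hA.ne' hB.ne',
    div_le_div_iff₀ hC (mul_pos hA hB)]
  refine le_of_sq_le_sq ?_ (by positivity)
  linarith

theorem triangle (hc : 0 < c) (ha : 0 ≤ a) (hb : 0 ≤ b) (hz : 0 ≤ z) :
    ssimDist c a z ≤ ssimDist c a b + ssimDist c b z := by
  wlog haz : a ≤ z generalizing a z
  · rw [comm c a z, comm c a b, comm c b z, add_comm]
    exact this hz ha (le_of_not_ge haz)
  rcases le_total b a with hba | hab
  · calc ssimDist c a z = ssimDist c z a := comm c a z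
      _ ≤ ssimDist c z b := le_of_mem_uIcc hc hz hb (Set.mem_uIcc.2 (Or.inr ⟨hba, haz⟩))
      _ ≤ ssimDist c a b + ssimDist c b z := by rw [comm c z b]; exact le_add_of_nonneg_left nonneg
  rcases le_total z b with hzb | hbz
  · calc ssimDist c a z ≤ ssimDist c a b := le_of_mem_uIcc hc ha hb (Set.mem_uIcc_of_le haz hzb)
      _ ≤ ssimDist c a b + ssimDist c b z := le_add_of_nonneg_right nonneg
  · exact triangle_of_le_of_le hc ha hab hbz

end ssimDist

theorem dists_scalar_triangle (c : ℝ) (hc : 0 < c) (a b z : ℝ)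
    (ha : 0 ≤ a) (hb : 0 ≤ b) (hz : 0 ≤ z) :
    |a - z| / Real.sqrt (a^2 + z^2 + c) ≤
      |a - b| / Real.sqrt (a^2 + b^2 + c) + |b - z| / Real.sqrt (b^2 + z^2 + c) :=
  ssimDist.triangle hc ha hb hz
end

section
/- For vectors x, y ∈ ℝⁿ with means μ_x, μ_y, variances σ_x², σ_y², covariance σ_xy, and constants c₁, c₂ > 0, if l(x,y) = (2μ_xμ_y + c₁)/(μ_x² + μ_y² + c₁) = 1 and s(x,y) = (2σ_xy + c₂)/(σ_x² + σ_y² + c₂) = 1, then x = y. -/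
/-!
If `l = 1`, clearing the denominator leaves `(μ_x - μ_y)² = 0`. If `s = 1`, clearing the
denominator leaves `2 σ_xy = σ_x² + σ_y²`, i.e. the squared distance between the mean-centred
vectors vanishes. Equal means and equal centred vectors give `x = y`.
-/

open Finset

theorem eq_of_add_div_add_eq_one {K : Type*} [Field K] {a b c : K} (h : (a + c) / (b + c) = 1) :
    a = b := by
  have hden : b + c ≠ 0 := by
    rintro hzero
    simp [hzero] at h
  exact add_right_cancel ((div_eq_one_iff_eq hden).mp h)

theorem eq_of_two_mul_add_div_sq_add_sq_add_eq_one {K : Type*} [Field K] {a b c : K}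
    (h : (2 * a * b + c) / (a ^ 2 + b ^ 2 + c) = 1) : a = b := by
  have hsq : (a - b) ^ 2 = 0 := by
    linear_combination -eq_of_add_div_add_eq_one h
  exact sub_eq_zero.mp (pow_eq_zero_iff two_ne_zero |>.mp hsq)

theorem eq_of_two_mul_sum_mul_eq_sum_sq_add_sum_sq {ι : Type*} [Fintype ι] {u v : ι → ℝ}
    (h : 2 * ∑ i, u i * v i = ∑ i, u i ^ 2 + ∑ i, v i ^ 2) : u = v := by
  have hdist : ∑ i, (u i - v i) ^ 2 = 0 := by
    simp only [sub_sq, sum_add_distrib, sum_sub_distrib, mul_assoc, ← mul_sum]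
    linarith
  funext i
  have hi := (sum_eq_zero_iff_of_nonneg fun j _ => sq_nonneg (u j - v j)).mp hdist i (mem_univ i)
  exact sub_eq_zero.mp (pow_eq_zero_iff two_ne_zero |>.mp hi)

theorem dists_identity_of_indiscernibles_general {n : ℕ} (x y : Fin n → ℝ)
    (c₁ c₂ : ℝ)
    (hl : (2 * ((∑ i, x i) / n) * ((∑ i, y i) / n) + c₁) /
          (((∑ i, x i) / n)^2 + ((∑ i, y i) / n)^2 + c₁) = 1)
    (hs : (2 * ((∑ i, (x i - (∑ j, x j) / n) * (y i - (∑ j, y j) / n)) / n) + c₂) /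
          ((∑ i, (x i - (∑ j, x j) / n)^2) / n + (∑ i, (y i - (∑ j, y j) / n)^2) / n + c₂) = 1) :
    x = y := by
  obtain rfl | hn := n.eq_zero_or_pos
  · exact Subsingleton.elim x y
  have hmean := eq_of_two_mul_add_div_sq_add_sq_add_eq_one hl
  have hcov := eq_of_add_div_add_eq_one hs
  rw [mul_div_assoc', ← add_div, div_left_inj' (by positivity)] at hcov
  have hcentred := eq_of_two_mul_sum_mul_eq_sum_sq_add_sum_sq hcov
  funext i
  simpa [hmean] using congrFun hcentred i

theorem dists_identity_of_indiscernibles {n : ℕ} (hn : 1 ≤ n) (x y : Fin n → ℝ)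
    (c₁ c₂ : ℝ) (hc₁ : 0 < c₁) (hc₂ : 0 < c₂)
    (hl : (2 * ((∑ i, x i) / n) * ((∑ i, y i) / n) + c₁) /
          (((∑ i, x i) / n)^2 + ((∑ i, y i) / n)^2 + c₁) = 1)
    (hs : (2 * ((∑ i, (x i - (∑ j, x j) / n) * (y i - (∑ j, y j) / n)) / n) + c₂) /
          ((∑ i, (x i - (∑ j, x j) / n)^2) / n + (∑ i, (y i - (∑ j, y j) / n)^2) / n + c₂) = 1) :
    x = y :=
  dists_identity_of_indiscernibles_general x y c₁ c₂ hl hs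
end

section
/- Let d(a,b) = |a − b|/√(a² + b² + c) for a, b ≥ 0 and fixed c > 0. Then d is a metric on [0, ∞): it is nonnegative, symmetric, vanishes exactly when a = b, and satisfies the triangle inequality. -/
/-!
Monotonicity: for fixed `x`, the dissimilarity `d x t` grows as `t` moves away from `x` on either
side, since `(x - u)² (x² + t² + c) - (x - t)² (x² + u² + c) = (u - t) (c (t + u - 2x) + 2x (tu - x²))`.
This settles the triangle inequality `d a z ≤ d a b + d b z` (for `a ≤ z`) unless `a ≤ b ≤ z`.
In that case, writing `s₁, s₂, s₃` for the denominators of `d a b, d b z, d a z`, it amounts to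
`(b - a) s₂ (s₃ - s₁) + (z - b) s₁ (s₃ - s₂) ≥ 0`; rationalising `s₃ - s₁ = (z² - b²)/(s₃ + s₁)` and
`s₃ - s₂ = (a² - b²)/(s₃ + s₂)` turns it into `s₁ (a + b) (s₁ + s₃) ≤ s₂ (z + b) (s₂ + s₃)`,
which holds factorwise.
-/

/-- `√(1 - (2ab + c)/(a² + b² + c))`, the square root of one minus the SSIM mean-comparison term. -/
noncomputable def ssimMeanDist (c a b : ℝ) : ℝ :=
  |a - b| / √(a ^ 2 + b ^ 2 + c)

namespace ssimMeanDist

variable {a b c t u x z : ℝ}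

theorem nonneg (c a b : ℝ) : 0 ≤ ssimMeanDist c a b := by
  unfold ssimMeanDist; positivity

theorem comm (c a b : ℝ) : ssimMeanDist c a b = ssimMeanDist c b a := by
  rw [ssimMeanDist, ssimMeanDist, abs_sub_comm, add_comm (a ^ 2)]

theorem eq_zero_iff (hc : 0 < c) : ssimMeanDist c a b = 0 ↔ a = b := by
  have : √(a ^ 2 + b ^ 2 + c) ≠ 0 := by positivity
  simp [ssimMeanDist, this, sub_eq_zero]

theorem sq_eq (hc : 0 ≤ c) : ssimMeanDist c a b ^ 2 = (a - b) ^ 2 / (a ^ 2 + b ^ 2 + c) := by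
  rw [ssimMeanDist, div_pow, sq_abs, Real.sq_sqrt (by positivity)]

theorem of_le (hab : a ≤ b) : ssimMeanDist c a b = (b - a) / √(a ^ 2 + b ^ 2 + c) := by
  rw [ssimMeanDist, abs_of_nonpos (sub_nonpos.2 hab), neg_sub]

theorem le_of_mem_uIcc (hc : 0 < c) (hx : 0 ≤ x) (hu : 0 ≤ u) (ht : t ∈ Set.uIcc x u) :
    ssimMeanDist c x t ≤ ssimMeanDist c x u := by
  rw [← sq_le_sq₀ (nonneg c x t) (nonneg c x u), sq_eq hc.le, sq_eq hc.le,
    div_le_div_iff₀ (by positivity) (by positivity)]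
  have key : (x - u) ^ 2 * (x ^ 2 + t ^ 2 + c) - (x - t) ^ 2 * (x ^ 2 + u ^ 2 + c)
      = (u - t) * (c * (t + u - 2 * x) + 2 * x * (t * u - x ^ 2)) := by ring
  rcases Set.mem_uIcc.1 ht with ⟨hxt, htu⟩ | ⟨hut, htx⟩
  · have : x ^ 2 ≤ t * u := by nlinarith
    linarith [mul_nonneg (sub_nonneg.2 htu)
      (add_nonneg (mul_nonneg hc.le (by linarith : 0 ≤ t + u - 2 * x))
        (mul_nonneg (by linarith : 0 ≤ 2 * x) (sub_nonneg.2 this)))]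
  · have : t * u ≤ x ^ 2 := by nlinarith
    linarith [mul_nonneg_of_nonpos_of_nonpos (sub_nonpos.2 hut)
      (add_nonpos (mul_nonpos_of_nonneg_of_nonpos hc.le (by linarith : t + u - 2 * x ≤ 0))
        (mul_nonpos_of_nonneg_of_nonpos (by linarith : 0 ≤ 2 * x) (sub_nonpos.2 this)))]

theorem triangle_of_le_of_le (hc : 0 < c) (ha : 0 ≤ a) (hab : a ≤ b) (hbz : b ≤ z) :
    ssimMeanDist c a z ≤ ssimMeanDist c a b + ssimMeanDist c b z := by
  rw [of_le hab, of_le hbz, of_le (hab.trans hbz)]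
  set s₁ := √(a ^ 2 + b ^ 2 + c)
  set s₂ := √(b ^ 2 + z ^ 2 + c)
  set s₃ := √(a ^ 2 + z ^ 2 + c)
  have hs₁ : 0 < s₁ := by positivity
  have hs₂ : 0 < s₂ := by positivity
  have hs₃ : 0 < s₃ := by positivity
  have h₁ : s₁ ^ 2 = a ^ 2 + b ^ 2 + c := Real.sq_sqrt (by positivity)
  have h₂ : s₂ ^ 2 = b ^ 2 + z ^ 2 + c := Real.sq_sqrt (by positivity)
  have h₃ : s₃ ^ 2 = a ^ 2 + z ^ 2 + c := Real.sq_sqrt (by positivity)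
  have h₁₂ : s₁ ≤ s₂ := Real.sqrt_le_sqrt (by nlinarith)
  have h₁₃ : s₁ ≤ s₃ := Real.sqrt_le_sqrt (by nlinarith)
  have hW : s₁ * (a + b) * (s₁ + s₃) ≤ s₂ * (z + b) * (s₂ + s₃) := by
    gcongr <;> nlinarith
  have key : 0 ≤ (b - a) * s₂ * (s₃ - s₁) + (z - b) * s₁ * (s₃ - s₂) := by
    refine le_of_mul_le_mul_right (a := (s₁ + s₃) * (s₂ + s₃)) ?_ (by positivity)
    calc 0 * ((s₁ + s₃) * (s₂ + s₃))
        ≤ (b - a) * (z - b) * (s₂ * (z + b) * (s₂ + s₃) - s₁ * (a + b) * (s₁ + s₃)) := by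
          rw [zero_mul]
          exact mul_nonneg (mul_nonneg (by linarith) (by linarith)) (by linarith)
      _ = _ := by
          linear_combination (-(b - a) * s₂ * (s₂ + s₃)) * (h₃ - h₁)
            + (-(z - b) * s₁ * (s₁ + s₃)) * (h₃ - h₂)
  rw [div_add_div _ _ hs₁.ne' hs₂.ne', div_le_div_iff₀ hs₃ (by positivity)]
  linarith

theorem triangle (hc : 0 < c) (ha : 0 ≤ a) (hb : 0 ≤ b) (hz : 0 ≤ z) :
    ssimMeanDist c a z ≤ ssimMeanDist c a b + ssimMeanDist c b z := by
  wlog haz : a ≤ z generalizing a z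
  · have := this hz ha (le_of_not_ge haz)
    rw [comm c a z, comm c a b, comm c b z]
    linarith
  rcases le_total b a with hba | hab
  · have h := le_of_mem_uIcc hc hz hb (Set.mem_uIcc.2 (Or.inr ⟨hba, haz⟩))
    rw [comm c z a, comm c z b] at h
    linarith [nonneg c a b]
  rcases le_total z b with hzb | hbz
  · linarith [le_of_mem_uIcc hc ha hb (Set.mem_uIcc.2 (Or.inl ⟨haz, hzb⟩)), nonneg c b z]
  · exact triangle_of_le_of_le hc ha hab hbz

end ssimMeanDist

theorem dists_scalar_metric (c : ℝ) (hc : 0 < c) :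
    let d : ℝ → ℝ → ℝ := fun a b => |a - b| / Real.sqrt (a^2 + b^2 + c)
    (∀ a b : ℝ, 0 ≤ a → 0 ≤ b → 0 ≤ d a b) ∧
    (∀ a b : ℝ, 0 ≤ a → 0 ≤ b → d a b = d b a) ∧
    (∀ a b : ℝ, 0 ≤ a → 0 ≤ b → (d a b = 0 ↔ a = b)) ∧
    (∀ a b z : ℝ, 0 ≤ a → 0 ≤ b → 0 ≤ z → d a z ≤ d a b + d b z) :=
  ⟨fun a b _ _ => ssimMeanDist.nonneg c a b,
    fun a b _ _ => ssimMeanDist.comm c a b,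
    fun _ _ _ _ => ssimMeanDist.eq_zero_iff hc,
    fun _ _ _ ha hb hz => ssimMeanDist.triangle hc ha hb hz⟩
end
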